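/- arXiv:2405.19696 — 4 statements merged into one kernel-verified Lean document; each statement's English description precedes it below -/
import Mathlib

section
/- For every integer d ≥ 1, any matrix W ∈ M_d(ℂ) (indexed by ZMod d) that commutes with every Weyl operator, i.e. W · U_{a,b} = U_{a,b} · W for all a, b ∈ ZMod d, is a scalar multiple of the identity matrix: there exists c ∈ ℂ with W = c • 1. -/
open Matrix

/-- `ω = exp(2πi/d)`. -/
noncomputable def weylOmega (d : ℕ) : ℂ :=
  Complex.exp (2 * Real.pi * Complex.I / d)

/-- The clock matrix `Z`, diagonal with entries `ω ^ s`. -/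
noncomputable def clockMatrix (d : ℕ) : Matrix (ZMod d) (ZMod d) ℂ :=
  Matrix.diagonal fun s => weylOmega d ^ s.val

/-- The shift matrix `X`, with entries `X s s' = 1` iff `s = s' + 1`. -/
def shiftMatrix (d : ℕ) : Matrix (ZMod d) (ZMod d) ℂ :=
  Matrix.of fun s s' => if s = s' + 1 then 1 else 0

/-- The Weyl operator `U_{a,b} = Z^a · X^b`. -/
noncomputable def weylOp (d : ℕ) [NeZero d] (a b : ZMod d) : Matrix (ZMod d) (ZMod d) ℂ :=
  clockMatrix d ^ a.val * shiftMatrix d ^ b.val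

/-! Since `ω` is a primitive `d`-th root of unity, the clock matrix `Z` is diagonal with pairwise
distinct entries, so any `W` commuting with it is diagonal. Commuting with the cyclic shift `X`
gives `W (i + 1) (j + 1) = W i j`, so the diagonal of `W` is constant. -/

theorem Matrix.apply_eq_zero_of_commute_diagonal {n R : Type*} [Fintype n] [DecidableEq n]
    [CommRing R] [NoZeroDivisors R] {W : Matrix n n R} {f : n → R}
    (hf : Function.Injective f) (hW : Commute W (diagonal f)) {i j : n} (hij : i ≠ j) :
    W i j = 0 := by
  have hij_entry : W i j * f j = f i * W i j := by
    simpa only [mul_diagonal, diagonal_mul] using congr_fun₂ hW.eq i j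
  have : (f j - f i) * W i j = 0 := by rw [sub_mul, mul_comm, hij_entry, sub_self]
  exact (mul_eq_zero.mp this).resolve_left (sub_ne_zero.mpr (hf.ne hij.symm))

theorem ZMod.apply_eq_apply_zero_of_periodic_one {d : ℕ} {α : Type*} {f : ZMod d → α}
    (hf : Function.Periodic f 1) (i : ZMod d) : f i = f 0 := by
  obtain ⟨k, rfl⟩ := ZMod.intCast_surjective i
  simpa using hf.zsmul_eq k

theorem isPrimitiveRoot_weylOmega (d : ℕ) [NeZero d] : IsPrimitiveRoot (weylOmega d) d :=
  Complex.isPrimitiveRoot_exp d (NeZero.ne d)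

theorem injective_weylOmega_pow_val (d : ℕ) [NeZero d] :
    Function.Injective fun s : ZMod d => weylOmega d ^ s.val :=
  fun i j h => ZMod.val_injective d ((isPrimitiveRoot_weylOmega d).pow_inj i.val_lt j.val_lt h)

section Shift

variable {d : ℕ} [NeZero d]

theorem shiftMatrix_mul_apply (W : Matrix (ZMod d) (ZMod d) ℂ) (i j : ZMod d) :
    (shiftMatrix d * W) i j = W (i - 1) j := by
  simp [shiftMatrix, mul_apply, ← sub_eq_iff_eq_add]

theorem mul_shiftMatrix_apply (W : Matrix (ZMod d) (ZMod d) ℂ) (i j : ZMod d) :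
    (W * shiftMatrix d) i j = W i (j + 1) := by
  simp [shiftMatrix, mul_apply]

theorem apply_add_one_add_one_of_commute_shiftMatrix {W : Matrix (ZMod d) (ZMod d) ℂ}
    (hW : Commute W (shiftMatrix d)) (i j : ZMod d) : W (i + 1) (j + 1) = W i j := by
  simpa [mul_shiftMatrix_apply, shiftMatrix_mul_apply] using congr_fun₂ hW.eq (i + 1) j

end Shift

theorem exists_eq_smul_one_of_commute_clockMatrix_of_commute_shiftMatrix {d : ℕ} [NeZero d]
    {W : Matrix (ZMod d) (ZMod d) ℂ} (hZ : Commute W (clockMatrix d))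
    (hX : Commute W (shiftMatrix d)) : ∃ c : ℂ, W = c • 1 := by
  have hdiag : ∀ i, W i i = W 0 0 := ZMod.apply_eq_apply_zero_of_periodic_one
    (f := fun s => W s s) fun s => apply_add_one_add_one_of_commute_shiftMatrix hX s s
  refine ⟨W 0 0, Matrix.ext fun i j => ?_⟩
  obtain rfl | hij := eq_or_ne i j
  · simp [hdiag]
  · simp [apply_eq_zero_of_commute_diagonal (injective_weylOmega_pow_val d) hZ hij, hij]

section WeylOp

variable {d : ℕ} [Fact (1 < d)]

theorem weylOp_one_zero : weylOp d 1 0 = clockMatrix d := by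
  simp [weylOp, ZMod.val_one]

theorem weylOp_zero_one : weylOp d 0 1 = shiftMatrix d := by
  simp [weylOp, ZMod.val_one]

end WeylOp

theorem weyl_commutant_trivial_general (d : ℕ) [NeZero d]
    (W : Matrix (ZMod d) (ZMod d) ℂ)
    (hW : ∀ a b : ZMod d, W * weylOp d a b = weylOp d a b * W) :
    ∃ c : ℂ, W = c • (1 : Matrix (ZMod d) (ZMod d) ℂ) := by
  obtain rfl | hd1 := (NeZero.one_le : 1 ≤ d).eq_or_lt
  -- For `d = 1`, `(1 : ZMod 1).val = 0`, so `U_{1,0} = 1`; but matrices of size 1 are scalar anyway.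
  · exact ⟨W 0 0, Matrix.ext fun i j => by simp [Subsingleton.elim i 0, Subsingleton.elim j 0]⟩
  have : Fact (1 < d) := ⟨hd1⟩
  apply exists_eq_smul_one_of_commute_clockMatrix_of_commute_shiftMatrix
  · rw [← weylOp_one_zero]; exact hW 1 0
  · rw [← weylOp_zero_one]; exact hW 0 1

theorem weyl_commutant_trivial (d : ℕ) (hd : 1 ≤ d) [NeZero d]
    (W : Matrix (ZMod d) (ZMod d) ℂ)
    (hW : ∀ a b : ZMod d, W * weylOp d a b = weylOp d a b * W) :
    ∃ c : ℂ, W = c • (1 : Matrix (ZMod d) (ZMod d) ℂ) :=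
  weyl_commutant_trivial_general d W hW
end

section
/- Let E be a complex Hilbert space, v ∈ E a unit vector, P : E →L[ℂ] E the orthogonal projection onto the span of v, and H : E →L[ℂ] E a self-adjoint bounded operator. Then P ∘ H ∘ (1 − P) ∘ H ∘ P = ‖(1 − P)(H v)‖² • P; in particular this operator is zero if and only if v is an eigenvector of H, i.e. H v = ⟪v, H v⟫ • v. -/
open scoped InnerProductSpace

/-!
Writing `P = ⟪v, ·⟫ • v`, every sandwich `P ∘ T ∘ P` is the scalar `⟪v, T v⟫` times `P`.
For `T = H (1 - P) H` with `H` self-adjoint that scalar is `⟪H v, (1 - P) H v⟫`, and since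
`1 - P` is the orthogonal projection onto `vᗮ` this equals `‖(1 - P) H v‖²`.
-/

namespace RankOneProjection

variable {𝕜 E : Type*} [RCLike 𝕜] [NormedAddCommGroup E] [InnerProductSpace 𝕜 E]
  {v : E} {P : E →L[𝕜] E}

theorem comp_comp_eq_inner_smul (hP : ∀ x : E, P x = ⟪v, x⟫_𝕜 • v) (T : E →L[𝕜] E) :
    P ∘L T ∘L P = ⟪v, T v⟫_𝕜 • P := by
  ext x
  simp only [ContinuousLinearMap.comp_apply, smul_apply, hP, map_smul,
    inner_smul_right, smul_smul, mul_comm]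

theorem one_sub_apply (hP : ∀ x : E, P x = ⟪v, x⟫_𝕜 • v) (x : E) :
    (1 - P) x = x - ⟪v, x⟫_𝕜 • v := by
  rw [sub_apply, one_apply_eq_self, hP]

theorem inner_one_sub_apply_right (hP : ∀ x : E, P x = ⟪v, x⟫_𝕜 • v) (hv : ‖v‖ = 1)
    (x : E) : ⟪v, (1 - P) x⟫_𝕜 = 0 := by
  rw [one_sub_apply hP, inner_sub_right, inner_smul_right, inner_self_eq_norm_sq_to_K, hv]
  simp

theorem inner_one_sub_apply_self (hP : ∀ x : E, P x = ⟪v, x⟫_𝕜 • v) (hv : ‖v‖ = 1)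
    (x : E) : ⟪x, (1 - P) x⟫_𝕜 = (‖(1 - P) x‖ : 𝕜) ^ 2 := by
  have hx : x = (1 - P) x + ⟪v, x⟫_𝕜 • v := by rw [one_sub_apply hP, sub_add_cancel]
  nth_rw 1 [hx]
  rw [inner_add_left, inner_smul_left, inner_one_sub_apply_right hP hv, mul_zero, add_zero,
    inner_self_eq_norm_sq_to_K]

theorem smul_eq_zero_iff (hP : ∀ x : E, P x = ⟪v, x⟫_𝕜 • v) (hv : v ≠ 0) (c : 𝕜) :
    c • P = 0 ↔ c = 0 := by
  refine ⟨fun h => ?_, fun h => by rw [h, zero_smul]⟩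
  simpa only [smul_apply, zero_apply, hP, smul_eq_zero, inner_self_eq_zero, hv, or_false]
    using congrArg (fun T : E →L[𝕜] E => T v) h

end RankOneProjection

open RankOneProjection in
theorem rank_one_projection_sandwich
    {E : Type*} [NormedAddCommGroup E] [InnerProductSpace ℂ E] [CompleteSpace E]
    (v : E) (hv : ‖v‖ = 1)
    (P : E →L[ℂ] E) (hP : ∀ x : E, P x = ⟪v, x⟫_ℂ • v)
    (H : E →L[ℂ] E) (hH : IsSelfAdjoint H) :
    P ∘L H ∘L (1 - P) ∘L H ∘L P = ((‖(1 - P) (H v)‖ ^ 2 : ℝ) : ℂ) • P ∧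
      (P ∘L H ∘L (1 - P) ∘L H ∘L P = 0 ↔ H v = ⟪v, H v⟫_ℂ • v) := by
  have hsandwich : P ∘L H ∘L (1 - P) ∘L H ∘L P = ((‖(1 - P) (H v)‖ ^ 2 : ℝ) : ℂ) • P := calc
    P ∘L H ∘L (1 - P) ∘L H ∘L P = P ∘L (H ∘L (1 - P) ∘L H) ∘L P := rfl
    _ = ⟪v, H ((1 - P) (H v))⟫_ℂ • P := comp_comp_eq_inner_smul hP _
    _ = ((‖(1 - P) (H v)‖ ^ 2 : ℝ) : ℂ) • P := by
      rw [← H.adjoint_inner_left, hH.adjoint_eq, inner_one_sub_apply_self hP hv]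
      norm_cast
  have hv0 : v ≠ 0 := by rintro rfl; simp at hv
  refine ⟨hsandwich, ?_⟩
  rw [hsandwich, smul_eq_zero_iff hP hv0, Complex.ofReal_eq_zero, pow_eq_zero_iff two_ne_zero,
    norm_eq_zero, one_sub_apply hP, sub_eq_zero]
end

section
/- Let A be a unital C*-algebra over ℂ and let (α_t)_{t ∈ ℝ} be a strongly continuous one-parameter group of *-automorphisms of A, i.e. α_0 = id, α_{s+t} = α_s ∘ α_t for all s, t ∈ ℝ, and for each a ∈ A the map t ↦ α_t(a) is continuous. Suppose that for all a, b ∈ A the commutator norms ‖α_n(a)·b − b·α_n(a)‖ tend to 0 as n → ∞ along the natural numbers. Then for all a, b ∈ A the commutator norms ‖α_t(a)·b − b·α_t(a)‖ tend to 0 as t → +∞ along the reals. -/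
open Filter Topology

/-!
Since every `α n` is isometric, the maps `c ↦ ‖α n c * b - b * α n c‖` are `2‖b‖`-Lipschitz
uniformly in `n`, so their pointwise convergence to `0` is uniform on the compact orbit segment
`{α s a | s ∈ [0, 1]}`. Writing `t = ⌊t⌋₊ + s` gives `α t a = α ⌊t⌋₊ (α s a)` with `α s a` in
that segment.
-/

theorem lipschitzWith_norm_commutator {R : Type*} [NormedRing R] (b : R) :
    LipschitzWith (2 * ‖b‖₊) fun x : R => ‖x * b - b * x‖ := by
  refine LipschitzWith.of_dist_le_mul fun x y => ?_
  have hcomm : (x * b - b * x) - (y * b - b * y) = (x - y) * b - b * (x - y) := by noncomm_ring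
  calc dist ‖x * b - b * x‖ ‖y * b - b * y‖ ≤ ‖(x - y) * b - b * (x - y)‖ := by
        rw [← hcomm]; exact dist_norm_norm_le _ _
    _ ≤ ‖x - y‖ * ‖b‖ + ‖b‖ * ‖x - y‖ :=
        (norm_sub_le _ _).trans (add_le_add (norm_mul_le _ _) (norm_mul_le _ _))
    _ = 2 * ‖b‖ * dist x y := by rw [dist_eq_norm]; ring

theorem tendstoUniformlyOn_of_lipschitzWith {ι X : Type*} [PseudoMetricSpace X] {l : Filter ι}
    {F : ι → X → ℝ} {f : X → ℝ} {K : NNReal} {s : Set X} (hF : ∀ i, LipschitzWith K (F i))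
    (hs : IsCompact s) (h : ∀ x ∈ s, Tendsto (F · x) l (𝓝 (f x))) :
    TendstoUniformlyOn F f l s := by
  have : CompactSpace s := isCompact_iff_compactSpace.1 hs
  have hequi : Equicontinuous fun i (x : s) => F i x := by
    refine (LipschitzWith.uniformEquicontinuous _ K fun i => ?_).equicontinuous
    rw [← mul_one K]
    exact (hF i).comp (LipschitzWith.subtype_val s)
  rw [tendstoUniformlyOn_iff_tendstoUniformly_comp_coe]
  exact UniformFun.tendsto_iff_tendstoUniformly.1 <|
    (hequi.tendsto_uniformFun_iff_pi l _).2 (tendsto_pi_nhds.2 fun x => h x x.2)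

theorem TendstoUniformlyOn.tendsto_comp_of_eventually_mem {ι κ X α : Type*} [UniformSpace α]
    {F : ι → X → α} {c : α} {s : Set X} {p : Filter ι} {q : Filter κ} {u : κ → ι} {v : κ → X}
    (h : TendstoUniformlyOn F (fun _ => c) p s) (hu : Tendsto u q p) (hv : ∀ᶠ k in q, v k ∈ s) :
    Tendsto (fun k => F (u k) (v k)) q (𝓝 c) := by
  rw [Uniform.tendsto_nhds_right]
  exact (tendstoUniformlyOn_iff_tendsto.1 h).comp (hu.prodMk (tendsto_principal.2 hv))

theorem norm_asymptotic_abelian_discrete_to_continuous_general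
    {A : Type*} [NormedRing A] [StarRing A] [CStarRing A] [NormedAlgebra ℂ A]
    [CompleteSpace A] [StarModule ℂ A]
    (α : ℝ → (A ≃⋆ₐ[ℂ] A))
    (hadd : ∀ s t : ℝ, ∀ a : A, α (s + t) a = α s (α t a))
    (hcont : ∀ a : A, Continuous fun t : ℝ => α t a)
    (hdiscrete : ∀ a b : A,
      Tendsto (fun n : ℕ => ‖α n a * b - b * α n a‖) atTop (𝓝 0)) :
    ∀ a b : A, Tendsto (fun t : ℝ => ‖α t a * b - b * α t a‖) atTop (𝓝 0) := by
  let _ : CStarAlgebra A := {}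
  intro a b
  set K := (fun s : ℝ => α s a) '' Set.Icc 0 1
  have hunif : TendstoUniformlyOn (fun (n : ℕ) c => ‖α n c * b - b * α n c‖) 0 atTop K :=
    tendstoUniformlyOn_of_lipschitzWith
      (fun n => mul_one (2 * ‖b‖₊) ▸
        (lipschitzWith_norm_commutator b).comp (StarAlgEquiv.isometry (α n)).lipschitz)
      (isCompact_Icc.image (hcont a)) fun c _ => hdiscrete c b
  have hsplit : ∀ᶠ t : ℝ in atTop, α (t - ⌊t⌋₊) a ∈ K ∧ α t a = α ⌊t⌋₊ (α (t - ⌊t⌋₊) a) := by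
    filter_upwards [eventually_ge_atTop 0] with t ht
    refine ⟨⟨_, ⟨sub_nonneg.2 (Nat.floor_le ht), ?_⟩, rfl⟩, by rw [← hadd, add_sub_cancel]⟩
    linarith [Nat.lt_floor_add_one t]
  refine (hunif.tendsto_comp_of_eventually_mem tendsto_nat_floor_atTop
    (hsplit.mono fun t ht => ht.1)).congr' (hsplit.mono fun t ht => ?_)
  simp only [ht.2]

theorem norm_asymptotic_abelian_discrete_to_continuous
    {A : Type*} [NormedRing A] [StarRing A] [CStarRing A] [NormedAlgebra ℂ A]
    [CompleteSpace A] [StarModule ℂ A]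
    (α : ℝ → (A ≃⋆ₐ[ℂ] A))
    (h0 : ∀ a : A, α 0 a = a)
    (hadd : ∀ s t : ℝ, ∀ a : A, α (s + t) a = α s (α t a))
    (hcont : ∀ a : A, Continuous fun t : ℝ => α t a)
    (hdiscrete : ∀ a b : A,
      Tendsto (fun n : ℕ => ‖α n a * b - b * α n a‖) atTop (𝓝 0)) :
    ∀ a b : A, Tendsto (fun t : ℝ => ‖α t a * b - b * α t a‖) atTop (𝓝 0) :=
  norm_asymptotic_abelian_discrete_to_continuous_general α hadd hcont hdiscrete
end

section
/- Let d ≥ 2, let j, k ∈ Fin d with j ≠ k, and in M_d(ℂ) ⊗ M_d(ℂ) (matrices indexed by Fin d × Fin d) define the exchange term S := stdBasisMatrix (j,k) (k,j) 1 + stdBasisMatrix (k,j) (j,k) 1, and in M_d(ℂ) define B := stdBasisMatrix j j 1 − stdBasisMatrix k k 1. Then for all α, β, α', β' ∈ ℝ with α − β = α' − β', (exp(iαB) ⊗ₖ exp(iβB)) · S · (exp(−iαB) ⊗ₖ exp(−iβB)) = (exp(iα'B) ⊗ₖ exp(iβ'B)) · S · (exp(−iα'B) ⊗ₖ exp(−iβ'B));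 i.e. conjugation of S by the product rotation depends only on α − β. -/
/-! Since `B` is diagonal, conjugating by `exp(iαB) ⊗ₖ exp(iβB)` multiplies each matrix unit by a phase.
For the swapped units `(p, q) → (q, p)` making up `S` the phases of the two tensor factors combine to
`exp(i(α - β)(b p - b q))`, where `b` is the diagonal of `B`. -/

open Matrix Kronecker

theorem Matrix.diagonal_mul_single_mul_diagonal {n α : Type*} [Fintype n] [DecidableEq n]
    [NonUnitalNonAssocSemiring α] (u v : n → α) (p q : n) (c : α) :
    diagonal u * single p q c * diagonal v = single p q (u p * c * v q) := by
  ext a b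
  simp only [mul_diagonal, diagonal_mul, single_apply]
  split_ifs with h
  · obtain ⟨rfl, rfl⟩ := h
    rfl
  · simp

theorem Matrix.exp_smul_diagonal {n : Type*} [Fintype n] [DecidableEq n] (c : ℂ) (b : n → ℂ) :
    NormedSpace.exp (c • diagonal b) = diagonal fun p => Complex.exp (c * b p) := by
  rw [← diagonal_smul, exp_diagonal]
  congr 1
  ext p
  simp [Complex.exp_eq_exp_ℂ]

theorem kronecker_exp_diagonal_conj_single_swap {n : Type*} [Fintype n] [DecidableEq n]
    (b : n → ℂ) (p q : n) (t s : ℂ) :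
    (NormedSpace.exp ((Complex.I * t) • diagonal b) ⊗ₖ
        NormedSpace.exp ((Complex.I * s) • diagonal b)) * single (p, q) (q, p) 1 *
      (NormedSpace.exp ((-Complex.I * t) • diagonal b) ⊗ₖ
        NormedSpace.exp ((-Complex.I * s) • diagonal b)) =
    Complex.exp (Complex.I * (t - s) * (b p - b q)) • single (p, q) (q, p) 1 := by
  simp only [exp_smul_diagonal, diagonal_kronecker_diagonal, diagonal_mul_single_mul_diagonal,
    smul_single, smul_eq_mul, mul_one, ← Complex.exp_add]
  congr 2
  ring

theorem exchange_conjugation_depends_only_on_difference_general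
    (d : ℕ) (j k : Fin d)
    (S : Matrix (Fin d × Fin d) (Fin d × Fin d) ℂ)
    (hS : S = Matrix.single (j, k) (k, j) (1 : ℂ) +
        Matrix.single (k, j) (j, k) (1 : ℂ))
    (B : Matrix (Fin d) (Fin d) ℂ)
    (hB : B = Matrix.single j j (1 : ℂ) - Matrix.single k k (1 : ℂ))
    (α β α' β' : ℝ) (hdiff : α - β = α' - β') :
    (NormedSpace.exp ((Complex.I * α) • B) ⊗ₖ NormedSpace.exp ((Complex.I * β) • B)) * S *
      (NormedSpace.exp ((-Complex.I * α) • B) ⊗ₖ NormedSpace.exp ((-Complex.I * β) • B)) =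
    (NormedSpace.exp ((Complex.I * α') • B) ⊗ₖ NormedSpace.exp ((Complex.I * β') • B)) * S *
      (NormedSpace.exp ((-Complex.I * α') • B) ⊗ₖ NormedSpace.exp ((-Complex.I * β') • B)) := by
  have hB_diag : B = diagonal (Pi.single j 1 - Pi.single k 1) := by
    rw [hB, ← diagonal_single, ← diagonal_single, diagonal_sub]; rfl
  have hdiff' : (α : ℂ) - β = α' - β' := mod_cast hdiff
  simp only [hS, hB_diag, mul_add, add_mul, kronecker_exp_diagonal_conj_single_swap, hdiff']

theorem exchange_conjugation_depends_only_on_difference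
    (d : ℕ) (hd : 2 ≤ d) (j k : Fin d) (hjk : j ≠ k)
    (S : Matrix (Fin d × Fin d) (Fin d × Fin d) ℂ)
    (hS : S = Matrix.single (j, k) (k, j) (1 : ℂ) +
        Matrix.single (k, j) (j, k) (1 : ℂ))
    (B : Matrix (Fin d) (Fin d) ℂ)
    (hB : B = Matrix.single j j (1 : ℂ) - Matrix.single k k (1 : ℂ))
    (α β α' β' : ℝ) (hdiff : α - β = α' - β') :
    (NormedSpace.exp ((Complex.I * α) • B) ⊗ₖ NormedSpace.exp ((Complex.I * β) • B)) * S *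
      (NormedSpace.exp ((-Complex.I * α) • B) ⊗ₖ NormedSpace.exp ((-Complex.I * β) • B)) =
    (NormedSpace.exp ((Complex.I * α') • B) ⊗ₖ NormedSpace.exp ((Complex.I * β') • B)) * S *
      (NormedSpace.exp ((-Complex.I * α') • B) ⊗ₖ NormedSpace.exp ((-Complex.I * β') • B)) :=
  exchange_conjugation_depends_only_on_difference_general d j k S hS B hB α β α' β' hdiff
end
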